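/- Let σ be an aperiodic m-primitive substitution with minimal components Z₁,…,Z_m, and suppose (as can be arranged by passing to a power of σ) there are points w_i ∈ Z_i with σ(w_i) = w_i. Put r_i = w_i[−1], l_i = w_i[0] and W = ∪_{i=1}^m {x ∈ X_σ : x[−1] = r_i and x[0] = l_i}. Then W meets every T_σ-orbit, every point of W returns to W under some positive power of T_σ, and the return time to W is bounded: there exists k with X_σ = ∪_{n=0}^k T_σ^n W. -/

import Mathlib

open Filter Topology

namespace PaperStmt

variable {A : Type*} {B : Type*}

/-- Apply a substitution (letter-to-word map) to a word, by concatenation. -/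
def substWord (σ : B → List A) (w : List B) : List A := w.flatMap σ

/-- `σ^n` applied to a word. -/
def substIter (σ : A → List A) (n : ℕ) (w : List A) : List A := (substWord σ)^[n] w

/-- `σ^n(a)` for a letter `a`. -/
def substPow (σ : A → List A) (n : ℕ) (a : A) : List A := substIter σ n [a]

/-- The language of a substitution: factors of some `σ^n(a)`, `n ≥ 1`. -/
def Lang (σ : A → List A) : Set (List A) :=
  {w | ∃ a : A, ∃ n : ℕ, 1 ≤ n ∧ w <:+: substIter σ n [a]}

/-- The word `x[i], x[i+1], …, x[i+len-1]` read in a bi-infinite sequence. -/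
def seg (x : ℤ → A) (i : ℤ) (len : ℕ) : List A :=
  (List.range len).map fun k => x (i + k)

/-- The phase space `X_σ` of the substitutional dynamical system. -/
def Xsub (σ : A → List A) : Set (ℤ → A) :=
  {x | ∀ n : ℕ, seg x (-(n : ℤ)) (2 * n + 1) ∈ Lang σ}

/-- `L(X_σ)`: all finite words occurring in elements of `X_σ`. -/
def LangX (σ : A → List A) : Set (List A) :=
  {w | ∃ x ∈ Xsub σ, ∃ i : ℤ, seg x i w.length = w}

/-- The left shift `T`. -/
def shift (x : ℤ → A) : ℤ → A := fun k => x (k + 1)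

/-- The power `T^i` of the left shift, `i ∈ ℤ`. -/
def shiftZ (i : ℤ) (x : ℤ → A) : ℤ → A := fun k => x (k + i)

/-- `(X_σ, T_σ)` has no periodic points. -/
def Aperiodic (σ : A → List A) : Prop :=
  ∀ x ∈ Xsub σ, ∀ p : ℕ, 0 < p → shiftZ (p : ℤ) x ≠ x

/-- The coordinate at which the `n`-th block of the bi-infinite concatenation
`⋯ σ(x_{-1}).σ(x_0) σ(x_1) ⋯` starts (block `0` starts at coordinate `0`). -/
def blockStart (σ : B → List A) (x : ℤ → B) (n : ℤ) : ℤ :=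
  if 0 ≤ n then ∑ j ∈ Finset.range n.toNat, ((σ (x (j : ℤ))).length : ℤ)
  else -∑ j ∈ Finset.range (-n).toNat, ((σ (x (-(j : ℤ) - 1))).length : ℤ)

/-- `y` is the image of the bi-infinite sequence `x` under the substitution `σ`,
i.e. `y = ⋯ σ(x_{-1}).σ(x_0)σ(x_1)⋯` with `σ(x_0)` starting at coordinate `0`. -/
def IsSubstImage (σ : B → List A) (x : ℤ → B) (y : ℤ → A) : Prop :=
  ∀ n : ℤ, seg y (blockStart σ x n) (σ (x n)).length = σ (x n)

/-- `A_l`: the letters `a` with `|σ^n(a)| → ∞`. -/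
def longLetters (σ : A → List A) : Set A :=
  {a | Tendsto (fun n => (substPow σ n a).length) atTop atTop}

/-- A minimal component of `(X_σ, T_σ)`: a nonempty closed shift-invariant subset of `X_σ`
that is minimal with respect to inclusion. -/
def MinimalComponent [TopologicalSpace A] (σ : A → List A) (Z : Set (ℤ → A)) : Prop :=
  Z.Nonempty ∧ IsClosed Z ∧ Z ⊆ Xsub σ ∧ shift '' Z = Z ∧
    ∀ Z' : Set (ℤ → A), Z'.Nonempty → IsClosed Z' → Z' ⊆ Z → shift '' Z' = Z' → Z' = Z

/-- The element `T_σ^i σ^n([a])` of the Kakutani–Rokhlin partition `P_n`. -/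
def piece (σ : A → List A) (n : ℕ) (a : A) (i : ℕ) : Set (ℤ → A) :=
  {x | ∃ y z : ℤ → A, y ∈ Xsub σ ∧ y 0 = a ∧
    IsSubstImage (substPow σ n) y z ∧ x = shiftZ (i : ℤ) z}

/-- An `m`-primitive substitution, with respect to a decomposition
`A = P 0 ⊔ … ⊔ P (m-1) ⊔ A0`. -/
def IsMPrimitive (σ : A → List A) (m : ℕ) (P : Fin m → Set A) (A0 : Set A) : Prop :=
  (∀ i j : Fin m, i ≠ j → Disjoint (P i) (P j)) ∧
  (∀ i, Disjoint (P i) A0) ∧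
  ((⋃ i, P i) ∪ A0 = Set.univ) ∧
  (∀ i, ∃ a ∈ P i, ∃ b ∈ P i, a ≠ b) ∧
  (∀ i, ∀ a ∈ P i, ∀ b ∈ σ a, b ∈ P i) ∧
  (∀ i, ∀ a ∈ P i, ∀ b ∈ P i, ∃ n : ℕ, 1 ≤ n ∧ b ∈ substPow σ n a) ∧
  (∀ a : A, ∃ n : ℕ, 0 < n ∧ ∃ i, ∃ b ∈ P i, b ∈ substPow σ n a) ∧
  (∀ k : ℕ, 1 ≤ k → Lang (substPow σ k) = Lang σ) ∧
  (∀ a : A, [a] ∈ LangX σ)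

/-- The set `Z_i` attached to the part `A_i = P i` of an `m`-primitive substitution. -/
def Zset (σ : A → List A) {m : ℕ} (P : Fin m → Set A) (i : Fin m) : Set (ℤ → A) :=
  {x | x ∈ Xsub σ ∧ ∀ n : ℕ, ∃ k : ℕ, 1 ≤ k ∧ ∃ a ∈ P i,
    seg x (-(n : ℤ)) (2 * n + 1) <:+: substPow σ k a}

/-- The clopen set `W = ∪_i [r_i.l_i]` built from fixed points `w i`. -/
def Wset (σ : A → List A) {m : ℕ} (w : Fin m → ℤ → A) : Set (ℤ → A) :=
  ⋃ i : Fin m, {x | x ∈ Xsub σ ∧ x (-1) = w i (-1) ∧ x 0 = w i 0}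

/-- A return word, given the letters `r i = w_i[-1]` and `l i = w_i[0]`. -/
def IsReturnWord (σ : A → List A) {m : ℕ} (r l : Fin m → A) (u : List A) : Prop :=
  u ∈ LangX σ ∧ u ≠ [] ∧ ∃ i j : Fin m,
    (r i :: (u ++ [l j])) ∈ LangX σ ∧
    u.head? = some (l i) ∧ u.getLast? = some (r j) ∧
    ∀ t : Fin m, ¬ ([r t, l t] <:+: u)

/-- A proper substitution. -/
def IsProper (σ : A → List A) : Prop :=
  ∃ p : ℕ, 0 < p ∧ ∀ a : A,
    (∀ b c : A, [a, b] ∈ LangX σ → [a, c] ∈ LangX σ →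
      (substPow σ p b).head? = (substPow σ p c).head?) ∧
    (∀ b c : A, [b, a] ∈ LangX σ → [c, a] ∈ LangX σ →
      (substPow σ p b).getLast? = (substPow σ p c).getLast?)

/-- Membership in the set `V` of words `v₁S₁v₂S₂v₃` with `v₁,v₂,v₃ ∈ A_l`, `S₁,S₂ ∈ A_s^*`. -/
def Vcond (σ : A → List A) : A × List A × A × List A × A → Prop
  | (v1, S1, v2, S2, v3) =>
    v1 ∈ longLetters σ ∧ v2 ∈ longLetters σ ∧ v3 ∈ longLetters σ ∧
    (∀ c ∈ S1, c ∉ longLetters σ) ∧ (∀ c ∈ S2, c ∉ longLetters σ) ∧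
    (v1 :: (S1 ++ v2 :: (S2 ++ [v3]))) ∈ LangX σ

/-- The cylinder set `[v₁S₁.v₂S₂v₃]`. -/
def Vbase (σ : A → List A) : A × List A × A × List A × A → Set (ℤ → A)
  | (v1, S1, v2, S2, v3) =>
    {x | x ∈ Xsub σ ∧
      seg x (-(1 + S1.length : ℤ)) (v1 :: (S1 ++ v2 :: (S2 ++ [v3]))).length
        = v1 :: (S1 ++ v2 :: (S2 ++ [v3]))}

/-- The height `|σ^n(v₂S₂)|` of the tower over `[v₁S₁.v₂S₂v₃]` in `Ξ_n`. -/
def Vheight (σ : A → List A) (n : ℕ) : A × List A × A × List A × A → ℕ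
  | (_, _, v2, S2, _) => (substWord (substPow σ n) (v2 :: S2)).length

/-- The element `T_σ^i σ^n([v₁S₁.v₂S₂v₃])` of the Kakutani–Rokhlin partition `Ξ_n`. -/
def Vpiece (σ : A → List A) (n : ℕ) (q : A × List A × A × List A × A) (i : ℕ) :
    Set (ℤ → A) :=
  {x | ∃ y z : ℤ → A, y ∈ Vbase σ q ∧ IsSubstImage (substPow σ n) y z ∧
    x = shiftZ (i : ℤ) z}

/-- Membership in `Λ`. -/
def MemLambda (σ : A → List A) (s : ℕ → A × A) : Prop :=
  ∀ n : ℕ, [(s n).1, (s n).2] ∈ Lang σ ∧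
    (σ (s (n + 1)).1).getLast? = some (s n).1 ∧
    (σ (s (n + 1)).2).head? = some (s n).2

/-- `x = w(s̄)` for `s̄ ∈ Λ`. -/
def IsLambdaPoint (σ : A → List A) (s : ℕ → A × A) (x : ℤ → A) : Prop :=
  ∀ n : ℕ, seg x (-((substPow σ n (s n).1).length : ℤ))
      ((substPow σ n (s n).1).length + (substPow σ n (s n).2).length)
    = substPow σ n (s n).1 ++ substPow σ n (s n).2

/-- Membership in `M`: `i₀ = 0` and `a_j` occurs at position `i_{j+1}` of `σ(a_{j+1})`. -/
def MemM (σ : A → List A) (t : ℕ → A × ℕ) : Prop :=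
  (t 0).2 = 0 ∧ ∀ j : ℕ, (σ (t (j + 1)).1)[(t (j + 1)).2]? = some (t j).1

/-- The cutting points `j_n` attached to an element of `M`. -/
def jSeq (σ : A → List A) (t : ℕ → A × ℕ) : ℕ → ℕ
  | 0 => 0
  | n + 1 =>
      jSeq σ t n + (substWord (substPow σ n) ((σ (t (n + 1)).1).take (t (n + 1)).2)).length

/-- Membership in `M₀`: `j_n → ∞` and `|σ^n(a_n)| - j_n → ∞`. -/
def MZero (σ : A → List A) (t : ℕ → A × ℕ) : Prop :=
  MemM σ t ∧ ∀ N : ℕ, ∃ n0 : ℕ, ∀ n ≥ n0,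
    N ≤ jSeq σ t n ∧ jSeq σ t n + N ≤ (substPow σ n (t n).1).length

/-- `x = w(m̄)` for `m̄ ∈ M₀`. -/
def IsMPoint (σ : A → List A) (t : ℕ → A × ℕ) (x : ℤ → A) : Prop :=
  ∀ n : ℕ, seg x (-(jSeq σ t n : ℤ)) (substPow σ n (t n).1).length = substPow σ n (t n).1

/-
The return set `W` is, inside `X_σ`, the open cylinder `⋃ i, [r_i.l_i]`, and each
`[r_i.l_i]` is a neighbourhood of `w_i ∈ Z_i`. For `x ∈ X_σ`, the forward (resp. backward)
ω-limit set of `x` under the shift is a nonempty closed invariant subset of `X_σ`, so by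
Zorn's lemma and compactness it contains a minimal component, i.e. some `Z_i`, hence `w_i`.
Therefore the orbit of `x` enters `W` at arbitrarily large positive (resp. negative) times.
Finally the open sets `T^n W`, `n ≥ 0`, cover the compact space `X_σ`, so finitely many do.
-/

section Words

variable {A : Type*}

-- In `seg`, the list `List.range len : List ℕ` is coerced to `List ℤ` through the list monad.
lemma seg_eq_map_range (x : ℤ → A) (i : ℤ) (len : ℕ) :
    seg x i len = (List.range len).map fun k : ℕ => x (i + k) := by
  simp [seg, ← List.map_eq_flatMap]

lemma seg_shiftZ (x : ℤ → A) (j i : ℤ) (len : ℕ) :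
    seg (shiftZ j x) i len = seg x (i + j) len := by
  simp only [seg_eq_map_range, shiftZ, add_right_comm]

lemma seg_add (x : ℤ → A) (i : ℤ) (a b : ℕ) :
    seg x i (a + b) = seg x i a ++ seg x (i + a) b := by
  simp only [seg_eq_map_range, List.range_add, List.map_append, List.map_map, Function.comp_def,
    Nat.cast_add, add_assoc]

lemma seg_succ (x : ℤ → A) (i : ℤ) (len : ℕ) :
    seg x i (len + 1) = x i :: seg x (i + 1) len := by
  rw [Nat.add_comm, seg_add]
  simp [seg_eq_map_range]

lemma seg_isInfix_seg (x : ℤ → A) {i : ℤ} {len N : ℕ}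
    (h₁ : -(N : ℤ) ≤ i) (h₂ : i + len ≤ N + 1) :
    seg x i len <:+: seg x (-(N : ℤ)) (2 * N + 1) := by
  obtain ⟨p, hp⟩ : ∃ p : ℕ, -(N : ℤ) + p = i := ⟨(i + N).toNat, by omega⟩
  set q := 2 * N + 1 - (p + len)
  refine ⟨seg x (-(N : ℤ)) p, seg x (i + len) q, ?_⟩
  rw [show 2 * N + 1 = p + (len + q) by omega, seg_add, hp, seg_add, List.append_assoc]

lemma Lang.mem_of_isInfix {σ : A → List A} {u v : List A} (h : u <:+: v) (hv : v ∈ Lang σ) :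
    u ∈ Lang σ :=
  let ⟨a, n, hn, hv⟩ := hv
  ⟨a, n, hn, h.trans hv⟩

lemma mem_Xsub_iff {σ : A → List A} {x : ℤ → A} :
    x ∈ Xsub σ ↔ ∀ i len, seg x i len ∈ Lang σ :=
  ⟨fun hx i len => Lang.mem_of_isInfix (seg_isInfix_seg x (N := i.natAbs + len)
      (by omega) (by omega)) (hx _),
    fun hx n => hx _ _⟩

lemma shiftZ_mem_Xsub {σ : A → List A} {x : ℤ → A} (hx : x ∈ Xsub σ) (j : ℤ) :
    shiftZ j x ∈ Xsub σ :=
  mem_Xsub_iff.2 fun i len => seg_shiftZ x j i len ▸ mem_Xsub_iff.1 hx _ _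

lemma shift_injective : Function.Injective (shift : (ℤ → A) → ℤ → A) := fun x y h => by
  funext k
  simpa [shift] using congrFun h (k - 1)

def returnCylinder {m : ℕ} (w : Fin m → ℤ → A) : Set (ℤ → A) :=
  ⋃ i, {x | x (-1) = w i (-1) ∧ x 0 = w i 0}

lemma Wset_eq_inter (σ : A → List A) {m : ℕ} (w : Fin m → ℤ → A) :
    Wset σ w = Xsub σ ∩ returnCylinder w := by
  ext x
  simp only [Wset, returnCylinder, Set.mem_iUnion, Set.mem_inter_iff, Set.mem_ofPred_eq,
    exists_and_left]

lemma mem_returnCylinder {m : ℕ} (w : Fin m → ℤ → A) (i : Fin m) : w i ∈ returnCylinder w :=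
  Set.mem_iUnion.2 ⟨i, rfl, rfl⟩

end Words

section Topology

variable {A : Type*} [TopologicalSpace A]

lemma continuous_shiftZ (j : ℤ) : Continuous (shiftZ j : (ℤ → A) → ℤ → A) :=
  continuous_pi fun k => continuous_apply (k + j)

lemma continuous_seg (i : ℤ) (len : ℕ) : Continuous fun x : ℤ → A => seg x i len := by
  induction len generalizing i with
  | zero => simpa [seg_eq_map_range] using continuous_const
  | succ len ih =>
    simp_rw [seg_succ]
    exact List.continuous_cons.comp ((continuous_apply i).prodMk (ih _))

def shiftFlow : Flow ℤ (ℤ → A) where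
  toFun := shiftZ
  cont' := continuous_prod_of_discrete_left.2 continuous_shiftZ
  map_add' t₁ t₂ x := by
    funext k
    simp only [shiftZ, add_assoc]
  map_zero' x := by
    funext k
    simp only [shiftZ, add_zero]

lemma shift_image_eq_of_isInvariant {C : Set (ℤ → A)} (h : IsInvariant shiftFlow C) :
    shift '' C = C := by
  refine (Set.image_subset_iff.2 fun y hy => h 1 hy).antisymm fun y hy =>
    ⟨shiftZ (-1) y, h (-1) hy, ?_⟩
  show shiftZ 1 (shiftZ (-1) y) = y
  funext k
  simp [shiftZ]

theorem exists_minimal_closed_image_eq {X : Type*} [TopologicalSpace X] [CompactSpace X]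
    {f : X → X} (hf : Function.Injective f) {C : Set X} (hne : C.Nonempty) (hcl : IsClosed C)
    (hC : f '' C = C) :
    ∃ Z ⊆ C, Z.Nonempty ∧ IsClosed Z ∧ f '' Z = Z ∧
      ∀ Z' ⊆ Z, Z'.Nonempty → IsClosed Z' → f '' Z' = Z' → Z' = Z := by
  set S := {Z : Set X | Z.Nonempty ∧ IsClosed Z ∧ f '' Z = Z}
  have hchain : ∀ c ⊆ S, IsChain (· ⊆ ·) c → c.Nonempty → ∃ lb ∈ S, ∀ Z ∈ c, lb ⊆ Z := by
    intro c hc hchain hcne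
    have := hcne.to_subtype
    refine ⟨⋂₀ c, ⟨?_, isClosed_sInter fun Z hZ => (hc hZ).2.1, ?_⟩,
      fun Z hZ => Set.sInter_subset_of_mem hZ⟩
    · exact IsCompact.nonempty_sInter_of_directed_nonempty_isCompact_isClosed
        (hchain.symm.directedOn (r := fun s t : Set X => s ⊇ t)) (fun Z hZ => (hc hZ).1)
        (fun Z hZ => (hc hZ).2.1.isCompact) fun Z hZ => (hc hZ).2.1
    · rw [Set.sInter_eq_biInter, hf.injOn.image_biInter_eq hcne]
      exact Set.iInter₂_congr fun Z hZ => (hc hZ).2.2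
  obtain ⟨Z, hZC, hZ⟩ := zorn_superset_nonempty S hchain C ⟨hne, hcl, hC⟩
  exact ⟨Z, hZC, hZ.prop.1, hZ.prop.2.1, hZ.prop.2.2,
    fun Z' hZ' hne' hcl' hZ'' => hZ.eq_of_subset ⟨hne', hcl', hZ''⟩ hZ'⟩

lemma exists_minimalComponent_subset [Finite A] {σ : A → List A} {C : Set (ℤ → A)}
    (hCX : C ⊆ Xsub σ) (hne : C.Nonempty) (hcl : IsClosed C) (hC : shift '' C = C) :
    ∃ Z ⊆ C, MinimalComponent σ Z := by
  obtain ⟨Z, hZC, hne, hcl, hZ, hmin⟩ := exists_minimal_closed_image_eq shift_injective hne hcl hC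
  exact ⟨Z, hZC, hne, hcl, hZC.trans hCX, hZ, fun Z' hne' hcl' hZ' => hmin Z' hZ' hne' hcl'⟩

end Topology

section Discrete

variable {A : Type*} [TopologicalSpace A] [DiscreteTopology A]

lemma isClosed_Xsub (σ : A → List A) : IsClosed (Xsub σ) := by
  simp only [Xsub, Set.ofPred_forall]
  exact isClosed_iInter fun n => (isClosed_discrete _).preimage (continuous_seg _ _)

lemma isOpen_returnCylinder {m : ℕ} (w : Fin m → ℤ → A) : IsOpen (returnCylinder w) := by
  have hcoord (k : ℤ) (a : A) : IsOpen {x : ℤ → A | x k = a} :=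
    (isOpen_discrete {a}).preimage (continuous_apply (A := fun _ : ℤ => A) k)
  exact isOpen_iUnion fun i => (hcoord _ _).inter (hcoord _ _)

end Discrete

section Return

variable {A : Type*} [Finite A] [TopologicalSpace A] [DiscreteTopology A] {σ : A → List A}
  {m : ℕ} {Z : Fin m → Set (ℤ → A)} {w : Fin m → ℤ → A}

theorem frequently_shiftZ_mem_Wset
    (hZall : ∀ Z' : Set (ℤ → A), MinimalComponent σ Z' → ∃ i, Z' = Z i) (hw : ∀ i, w i ∈ Z i)
    {l : Filter ℤ} [l.NeBot] (hl : ∀ t, Tendsto (t + ·) l l) {x : ℤ → A} (hx : x ∈ Xsub σ) :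
    ∃ᶠ t in l, shiftZ t x ∈ Wset σ w := by
  set Ω := omegaLimit l shiftFlow {x}
  have hΩX : Ω ⊆ Xsub σ :=
    (omegaLimit_subset_closure_image2 _ _ _ univ_mem).trans <| closure_minimal
      (by rintro _ ⟨t, -, y, rfl, rfl⟩; exact shiftZ_mem_Xsub hx t) (isClosed_Xsub σ)
  obtain ⟨Z', hZ'Ω, hZ'⟩ := exists_minimalComponent_subset hΩX
    (nonempty_omegaLimit _ _ _ (Set.singleton_nonempty x)) (isClosed_omegaLimit _ _ _)
    (shift_image_eq_of_isInvariant (shiftFlow.isInvariant_omegaLimit l _ hl))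
  obtain ⟨i, rfl⟩ := hZall Z' hZ'
  have hwΩ : w i ∈ Ω := hZ'Ω (hw i)
  refine ((mem_omegaLimit_iff_frequently _ _ _ _).1 hwΩ _
    ((isOpen_returnCylinder w).mem_nhds (mem_returnCylinder w i))).mono ?_
  rintro t ⟨_, rfl, ht⟩
  rw [Wset_eq_inter]
  exact ⟨shiftZ_mem_Xsub hx t, ht⟩

variable (hZall : ∀ Z' : Set (ℤ → A), MinimalComponent σ Z' → ∃ i, Z' = Z i)
  (hw : ∀ i, w i ∈ Z i)
include hZall hw

theorem exists_pos_shiftZ_mem_Wset {x : ℤ → A} (hx : x ∈ Xsub σ) :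
    ∃ n : ℕ, 1 ≤ n ∧ shiftZ (n : ℤ) x ∈ Wset σ w := by
  obtain ⟨t, hxt, ht⟩ := ((frequently_shiftZ_mem_Wset hZall hw
    (fun t => tendsto_atTop_add_const_left _ t tendsto_id) hx).and_eventually
    (eventually_ge_atTop 1)).exists
  lift t to ℕ using by omega
  exact ⟨t, by exact_mod_cast ht, hxt⟩

theorem exists_shiftZ_neg_mem_Wset {x : ℤ → A} (hx : x ∈ Xsub σ) :
    ∃ n : ℕ, shiftZ (-(n : ℤ)) x ∈ Wset σ w := by
  obtain ⟨t, hxt, ht⟩ := ((frequently_shiftZ_mem_Wset hZall hw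
    (fun t => tendsto_atBot_add_const_left _ t tendsto_id) hx).and_eventually
    (eventually_le_atBot 0)).exists
  exact ⟨(-t).toNat, by rwa [Int.toNat_of_nonneg (by omega), neg_neg]⟩

theorem exists_bound_shiftZ_neg_mem_Wset :
    ∃ k : ℕ, ∀ x ∈ Xsub σ, ∃ n : ℕ, n ≤ k ∧ shiftZ (-(n : ℤ)) x ∈ Wset σ w := by
  have hcover : Xsub σ ⊆ ⋃ n : ℕ, shiftZ (-(n : ℤ)) ⁻¹' returnCylinder w := fun x hx => by
    obtain ⟨n, hn⟩ := exists_shiftZ_neg_mem_Wset hZall hw hx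
    rw [Wset_eq_inter] at hn
    exact Set.mem_iUnion.2 ⟨n, hn.2⟩
  obtain ⟨s, hs⟩ := (isClosed_Xsub σ).isCompact.elim_finite_subcover _
    (fun n => (isOpen_returnCylinder w).preimage (continuous_shiftZ _)) hcover
  refine ⟨s.sup id, fun x hx => ?_⟩
  obtain ⟨n, hn, hxn⟩ := Set.mem_iUnion₂.1 (hs hx)
  rw [Wset_eq_inter]
  exact ⟨n, s.le_sup (f := id) hn, shiftZ_mem_Xsub hx _, hxn⟩

end Return

theorem return_set_properties_general
    {A : Type*} [Fintype A] [TopologicalSpace A] [DiscreteTopology A]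
    (σ : A → List A) (m : ℕ) (Z : Fin m → Set (ℤ → A))
    (hZall : ∀ Z' : Set (ℤ → A), MinimalComponent σ Z' → ∃ i, Z' = Z i)
    (w : Fin m → ℤ → A) (hw : ∀ i, w i ∈ Z i) :
    -- `W` meets every `T_σ`-orbit
    (∀ x ∈ Xsub σ, ∃ k : ℤ, shiftZ k x ∈ Wset σ w) ∧
    -- every point of `W` returns to `W`
    (∀ z ∈ Wset σ w, ∃ n : ℕ, 1 ≤ n ∧ shiftZ (n : ℤ) z ∈ Wset σ w) ∧
    -- the return time is bounded: `X_σ = ∪_{n=0}^k T_σ^n W`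
    (∃ k : ℕ, ∀ x ∈ Xsub σ, ∃ n : ℕ, n ≤ k ∧ shiftZ (-(n : ℤ)) x ∈ Wset σ w) := by
  refine ⟨fun x hx => ?_, fun z hz => ?_, exists_bound_shiftZ_neg_mem_Wset hZall hw⟩
  · obtain ⟨n, -, hn⟩ := exists_pos_shiftZ_mem_Wset hZall hw hx
    exact ⟨n, hn⟩
  · exact exists_pos_shiftZ_mem_Wset hZall hw (Wset_eq_inter σ w ▸ hz).1

/-- For an aperiodic `m`-primitive substitution with fixed points
`w_i ∈ Z_i`, the set `W = ∪_i [r_i.l_i]` meets every `T_σ`-orbit, consists of recurrent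
points, and the return time to `W` is bounded. -/
theorem return_set_properties
    {A : Type*} [Fintype A] [TopologicalSpace A] [DiscreteTopology A]
    (σ : A → List A) (hne : ∀ a, σ a ≠ [])
    (hunc : ¬ (Xsub σ).Countable) (hap : Aperiodic σ)
    (m : ℕ) (P : Fin m → Set A) (A0 : Set A) (hprim : IsMPrimitive σ m P A0)
    (Z : Fin m → Set (ℤ → A)) (hZ : ∀ i, MinimalComponent σ (Z i))
    (hZinj : Function.Injective Z)
    (hZall : ∀ Z' : Set (ℤ → A), MinimalComponent σ Z' → ∃ i, Z' = Z i)
    (w : Fin m → ℤ → A) (hw : ∀ i, w i ∈ Z i)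
    (hfix : ∀ i, IsSubstImage σ (w i) (w i)) :
    -- `W` meets every `T_σ`-orbit
    (∀ x ∈ Xsub σ, ∃ k : ℤ, shiftZ k x ∈ Wset σ w) ∧
    -- every point of `W` returns to `W`
    (∀ z ∈ Wset σ w, ∃ n : ℕ, 1 ≤ n ∧ shiftZ (n : ℤ) z ∈ Wset σ w) ∧
    -- the return time is bounded: `X_σ = ∪_{n=0}^k T_σ^n W`
    (∃ k : ℕ, ∀ x ∈ Xsub σ, ∃ n : ℕ, n ≤ k ∧ shiftZ (-(n : ℤ)) x ∈ Wset σ w) :=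
  return_set_properties_general σ m Z hZall w hw

end PaperStmt
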